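/- arXiv:1212.0244 — 4 statements merged into one kernel-verified Lean document; each statement's English description precedes it below -/
import Mathlib

section
/- For every real t and every real δ > -1, one has ∫_{ℝ} e^{-itx} / (2π cosh^{2δ+2}(x)) dx = 4^δ Γ(δ+1−it/2) Γ(δ+1+it/2) / (π Γ(2δ+2)). -/
/-!
Substitute `u = σ(2x) = eˣ / (2 cosh x)`, so that `1 - u = e⁻ˣ / (2 cosh x)` and
`du = 2 u (1 - u) dx`. Then `u^a (1 - u)^b = e^{(a - b) x} / (2 cosh x)^{a + b}`, and for
`a, b = δ + 1 ∓ it/2` the integrand becomes `4^δ / π` times the Beta integrand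
`u^{a-1} (1 - u)^{b-1}` on `(0, 1)`; finally `B(a, b) = Γ(a) Γ(b) / Γ(a + b)`.
-/

open Real Complex MeasureTheory Set

namespace Real

theorem sigmoid_two_mul (x : ℝ) : sigmoid (2 * x) = exp x / (2 * cosh x) := by
  rw [sigmoid_def, cosh_eq, show -(2 * x) = -x + -x by ring, exp_add]
  have hx : exp (-x) * exp x = 1 := by rw [← exp_add, neg_add_cancel, exp_zero]
  have := exp_pos x
  field_simp
  linear_combination (-exp (-x)) * hx

theorem one_sub_sigmoid_two_mul (x : ℝ) : 1 - sigmoid (2 * x) = exp (-x) / (2 * cosh x) := by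
  rw [← sigmoid_neg, ← mul_neg, sigmoid_two_mul, cosh_neg]

theorem hasDerivAt_sigmoid_two_mul (x : ℝ) :
    HasDerivAt (fun x => sigmoid (2 * x)) (2 * (sigmoid (2 * x) * (1 - sigmoid (2 * x)))) x :=
  ((hasDerivAt_sigmoid (2 * x)).comp x ((hasDerivAt_id x).const_mul 2)).congr_deriv (by ring)

theorem image_sigmoid_two_mul : (fun x => sigmoid (2 * x)) '' univ = Ioo 0 1 := by
  rw [image_univ, ← range_sigmoid]
  exact (mul_left_surjective₀ two_ne_zero).range_comp sigmoid

theorem integral_comp_sigmoid_two_mul {E : Type*} [NormedAddCommGroup E] [NormedSpace ℝ E]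
    (g : ℝ → E) :
    ∫ x, (2 * (sigmoid (2 * x) * (1 - sigmoid (2 * x)))) • g (sigmoid (2 * x)) =
      ∫ u in Ioo 0 1, g u := by
  have := integral_image_eq_integral_abs_deriv_smul MeasurableSet.univ
    (fun x _ => (hasDerivAt_sigmoid_two_mul x).hasDerivWithinAt)
    ((sigmoid_strictMono.comp (strictMono_mul_left_of_pos two_pos)).injective.injOn) g
  rw [image_sigmoid_two_mul, Measure.restrict_univ] at this
  rw [this]
  congr 1 with x
  have := sigmoid_pos (2 * x)
  have := sub_pos.2 (sigmoid_lt_one (2 * x))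
  rw [abs_of_pos (by positivity)]

end Real

namespace Complex

theorem ofReal_exp_cpow (x : ℝ) (a : ℂ) : ((Real.exp x : ℝ) : ℂ) ^ a = exp (x * a) := by
  rw [cpow_def_of_ne_zero (by exact_mod_cast (Real.exp_pos x).ne'),
    ← ofReal_log (Real.exp_pos x).le, Real.log_exp]

theorem betaIntegral_eq_Gamma_mul_Gamma_div {a b : ℂ} (ha : 0 < a.re) (hb : 0 < b.re) :
    betaIntegral a b = Gamma a * Gamma b / Gamma (a + b) := by
  rw [Gamma_mul_Gamma_eq_betaIntegral ha hb, mul_div_cancel_left₀]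
  exact Gamma_ne_zero_of_re_pos (by rw [add_re]; positivity)

theorem setIntegral_Ioo_eq_betaIntegral (a b : ℂ) :
    ∫ u in Ioo (0 : ℝ) 1, (u : ℂ) ^ (a - 1) * (1 - (u : ℂ)) ^ (b - 1) = betaIntegral a b := by
  rw [betaIntegral, intervalIntegral.integral_of_le zero_le_one, integral_Ioc_eq_integral_Ioo]

theorem ofReal_mul_one_sub_smul_cpow_sub_one_mul {u : ℝ} (hu : 0 < u) (hu' : u < 1) (a b : ℂ) :
    (u * (1 - u)) • ((u : ℂ) ^ (a - 1) * (1 - (u : ℂ)) ^ (b - 1)) =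
      (u : ℂ) ^ a * (1 - (u : ℂ)) ^ b := by
  have h0 : (u : ℂ) ≠ 0 := by exact_mod_cast hu.ne'
  have h1 : 1 - (u : ℂ) ≠ 0 := by exact_mod_cast (sub_pos.2 hu').ne'
  rw [real_smul, cpow_sub _ _ h0, cpow_sub _ _ h1, cpow_one, cpow_one]
  push_cast
  field_simp

theorem sigmoid_two_mul_cpow_mul_one_sub_cpow (x : ℝ) (a b : ℂ) :
    (sigmoid (2 * x) : ℂ) ^ a * (1 - (sigmoid (2 * x) : ℂ)) ^ b =
      exp ((a - b) * x) / ((2 * Real.cosh x : ℝ) : ℂ) ^ (a + b) := by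
  have hc : 0 < 2 * Real.cosh x := by positivity
  have hc' : ((2 * Real.cosh x : ℝ) : ℂ) ≠ 0 := by exact_mod_cast hc.ne'
  rw [← ofReal_one, ← ofReal_sub, Real.one_sub_sigmoid_two_mul, Real.sigmoid_two_mul, ofReal_div,
    ofReal_div, div_cpow_ofReal_nonneg (Real.exp_nonneg _) hc.le,
    div_cpow_ofReal_nonneg (Real.exp_nonneg _) hc.le, ofReal_exp_cpow, ofReal_exp_cpow,
    cpow_add _ _ hc', div_mul_div_comm, ← exp_add]
  congr 2
  push_cast
  ring

end Complex

theorem two_rpow_two_mul_add_two (δ : ℝ) : (2 : ℝ) ^ (2 * δ + 2) = 4 * 4 ^ δ := by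
  rw [rpow_add two_pos, rpow_mul zero_le_two]
  norm_num
  ring

theorem cosh_rpow_fourier_integrand_eq (t δ x : ℝ) :
    Complex.exp (-I * t * x) / ((2 * π : ℝ) * ((Real.cosh x ^ (2 * δ + 2) : ℝ) : ℂ)) =
      (((4 : ℝ) ^ δ / π : ℝ) : ℂ) * ((2 * (sigmoid (2 * x) * (1 - sigmoid (2 * x)))) •
        ((sigmoid (2 * x) : ℂ) ^ ((δ : ℂ) + 1 - I * t / 2 - 1) *
          (1 - (sigmoid (2 * x) : ℂ)) ^ ((δ : ℂ) + 1 + I * t / 2 - 1))) := by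
  rw [mul_smul, Complex.ofReal_mul_one_sub_smul_cpow_sub_one_mul (sigmoid_pos _)
    (sigmoid_lt_one _), Complex.sigmoid_two_mul_cpow_mul_one_sub_cpow,
    show (δ : ℂ) + 1 - I * t / 2 + ((δ : ℂ) + 1 + I * t / 2) = ((2 * δ + 2 : ℝ) : ℂ) by
      push_cast; ring,
    ← ofReal_cpow (by positivity), mul_rpow zero_le_two (cosh_pos x).le,
    two_rpow_two_mul_add_two, real_smul]
  have : ((4 ^ δ : ℝ) : ℂ) ≠ 0 := by exact_mod_cast (by positivity : (0 : ℝ) < 4 ^ δ).ne'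
  have : ((Real.cosh x ^ (2 * δ + 2) : ℝ) : ℂ) ≠ 0 := by
    exact_mod_cast (by positivity : (0 : ℝ) < Real.cosh x ^ (2 * δ + 2)).ne'
  have : (π : ℂ) ≠ 0 := by exact_mod_cast pi_ne_zero
  push_cast
  field_simp
  ring_nf

theorem cosh_power_fourier_integral (t δ : ℝ) (hδ : δ > -1) :
    ∫ x : ℝ, Complex.exp (-Complex.I * t * x) /
        ((2 * Real.pi : ℝ) * ((Real.cosh x ^ (2*δ+2) : ℝ) : ℂ))
      = (4:ℂ) ^ (δ:ℂ) * Complex.Gamma ((δ:ℂ) + 1 - Complex.I * t / 2) *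
          Complex.Gamma ((δ:ℂ) + 1 + Complex.I * t / 2) /
          ((Real.pi : ℂ) * Complex.Gamma (2*δ+2)) := by
  have hδ' : (0 : ℝ) < δ + 1 := by linarith
  have ha : 0 < ((δ : ℂ) + 1 - I * t / 2).re := by simpa using hδ'
  have hb : 0 < ((δ : ℂ) + 1 + I * t / 2).re := by simpa using hδ'
  simp_rw [cosh_rpow_fourier_integrand_eq, integral_const_mul]
  rw [integral_comp_sigmoid_two_mul fun u : ℝ =>
      (u : ℂ) ^ ((δ : ℂ) + 1 - I * t / 2 - 1) * (1 - (u : ℂ)) ^ ((δ : ℂ) + 1 + I * t / 2 - 1),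
    setIntegral_Ioo_eq_betaIntegral, betaIntegral_eq_Gamma_mul_Gamma_div ha hb,
    show (δ : ℂ) + 1 - I * t / 2 + ((δ : ℂ) + 1 + I * t / 2) = 2 * δ + 2 by ring,
    ofReal_div, ofReal_cpow zero_le_four]
  push_cast
  ring
end

section
/- Let W_m(x) = −(πħ/L)[(ν+m+1) cot(πx/L) − β/(ν+m+1)] for m ∈ ℕ, and let V_m(x) = (1/2M)(W_m² − ħW_m') + E₀^{(m)} with E₀^{(m)} = ε₀((m+ν+1)² − β²/(m+ν+1)²), ε₀ = ħ²π²/(2ML²). Then for all x ∈ (0, L), V_{m+1}(x) − V₀(x) = −(ħ²(m+1)(2ν+m+2)/(2M)) · d²/dx² [ln(sin(πx/L))]. -/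
/-!
With `s = sin (π x / L)` and `a = ν + k + 1`, the superpotential has `W_k' = ħ (π / L)² a / s²`, and
`cot² = 1 / s² - 1` gives `W_k² - ħ W_k' = (πħ / L)² (a (a - 1) / s² - 2 β cot - a² + β² / a²)`.
The constant part is cancelled by `E₀ k`, leaving `V_k = ε₀ (a (a - 1) / s² - 2 β cot)`: the original
potential with `ν` shifted to `ν + k`. Hence `V_{m+1} - V_0 = ε₀ (m + 1)(2ν + m + 2) / s²`, a multiple
of `(log sin (π x / L))'' = -(π / L)² / s²`.
-/

open Real Set Topology

theorem HasDerivAt.cos_div_sin {f : ℝ → ℝ} {f' x : ℝ} (hf : HasDerivAt f f' x)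
    (hx : Real.sin (f x) ≠ 0) :
    HasDerivAt (fun y => Real.cos (f y) / Real.sin (f y)) (-f' / Real.sin (f x) ^ 2) x := by
  refine (hf.cos.div hf.sin hx).congr_deriv ?_
  congr 1
  linear_combination (-f') * sin_sq_add_cos_sq (f x)

theorem deriv_deriv_log_sin {f : ℝ → ℝ} {c x : ℝ} (hf : ∀ y, HasDerivAt f c y)
    (hx : sin (f x) ≠ 0) :
    deriv (deriv fun y => log (sin (f y))) x = -c ^ 2 / sin (f x) ^ 2 := by
  have hsin_ne : ∀ᶠ y in 𝓝 x, sin (f y) ≠ 0 :=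
    (continuous_sin.continuousAt.comp (hf x).continuousAt).eventually_ne hx
  have hlog_deriv : deriv (fun y => log (sin (f y))) =ᶠ[𝓝 x]
      fun y => c * (cos (f y) / sin (f y)) := by
    filter_upwards [hsin_ne] with y hy
    rw [((hf y).sin.log hy).deriv]
    ring
  rw [hlog_deriv.deriv_eq, (((hf x).cos_div_sin hx).const_mul c).deriv]
  ring

theorem hasDerivAt_pi_mul_div (L y : ℝ) : HasDerivAt (fun y => π * y / L) (π / L) y := by
  simpa using ((hasDerivAt_id y).const_mul π).div_const L

theorem sin_pi_mul_div_pos {L x : ℝ} (hx : x ∈ Ioo 0 L) : 0 < sin (π * x / L) := by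
  obtain ⟨hx0, hxL⟩ := hx
  have hL : 0 < L := hx0.trans hxL
  apply sin_pos_of_pos_of_lt_pi (by positivity)
  rw [div_lt_iff₀ hL]
  nlinarith [pi_pos]

theorem potential_eq_poschlTeller {L hbar M ν β ε₀ : ℝ}
    (hε₀ : ε₀ = hbar ^ 2 * π ^ 2 / (2 * M * L ^ 2)) {W : ℕ → ℝ → ℝ}
    (hW : ∀ (k : ℕ) (x : ℝ), W k x = -(π * hbar / L) *
        ((ν + k + 1) * (cos (π * x / L) / sin (π * x / L)) - β / (ν + k + 1)))
    {E₀ : ℕ → ℝ} (hE₀ : ∀ k : ℕ, E₀ k = ε₀ * (((k : ℝ) + ν + 1) ^ 2 - β ^ 2 / ((k : ℝ) + ν + 1) ^ 2))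
    {V : ℕ → ℝ → ℝ}
    (hV : ∀ (k : ℕ) (x : ℝ), V k x = (1 / (2 * M)) * ((W k x) ^ 2 - hbar * deriv (W k) x) + E₀ k)
    (k : ℕ) (hk : ν + k + 1 ≠ 0) {x : ℝ} (hx : sin (π * x / L) ≠ 0) :
    V k x = ε₀ * ((ν + k + 1) * (ν + k) / sin (π * x / L) ^ 2
      - 2 * β * (cos (π * x / L) / sin (π * x / L))) := by
  have hW_deriv : deriv (W k) x =
      -(π * hbar / L) * ((ν + k + 1) * (-(π / L) / sin (π * x / L) ^ 2)) := by
    rw [show W k = _ from funext (hW k)]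
    exact ((((hasDerivAt_pi_mul_div L x).cos_div_sin hx).const_mul _).sub_const _
      |>.const_mul _).deriv
  have hcot_sq : (cos (π * x / L) / sin (π * x / L)) ^ 2 = 1 / sin (π * x / L) ^ 2 - 1 := by
    field_simp
    linear_combination cos_sq_add_sin_sq (π * x / L)
  have hβ_cancel : (ν + k + 1) * (β / (ν + k + 1)) = β := mul_div_cancel₀ β hk
  rw [hV, hW, hW_deriv, hE₀, hε₀, show (k : ℝ) + ν + 1 = ν + k + 1 by ring, ← div_pow]
  linear_combination (hbar ^ 2 * π ^ 2 / (2 * M * L ^ 2) * (ν + k + 1) ^ 2) * hcot_sq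
    - (hbar ^ 2 * π ^ 2 / (M * L ^ 2) * (cos (π * x / L) / sin (π * x / L))) * hβ_cancel

theorem hierarchic_potential_difference_general (L hbar M ν β : ℝ)
    (hν : 0 ≤ ν) (ε₀ : ℝ) (hε₀ : ε₀ = hbar^2 * Real.pi^2 / (2 * M * L^2))
    (m : ℕ)
    (W : ℕ → ℝ → ℝ)
    (hW : ∀ (k : ℕ) (x : ℝ), W k x = -(Real.pi * hbar / L) *
        ((ν + k + 1) * (Real.cos (Real.pi * x / L) / Real.sin (Real.pi * x / L)) - β / (ν + k + 1)))
    (E₀ : ℕ → ℝ)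
    (hE₀ : ∀ k : ℕ, E₀ k = ε₀ * (((k : ℝ) + ν + 1)^2 - β^2 / ((k : ℝ) + ν + 1)^2))
    (V : ℕ → ℝ → ℝ)
    (hV : ∀ (k : ℕ) (x : ℝ),
        V k x = (1 / (2 * M)) * ((W k x)^2 - hbar * deriv (W k) x) + E₀ k)
    (x : ℝ) (hx : x ∈ Ioo 0 L) :
    V (m + 1) x - V 0 x
      = -(hbar^2 * ((m : ℝ) + 1) * (2 * ν + m + 2) / (2 * M)) *
          deriv (deriv (fun y => Real.log (Real.sin (Real.pi * y / L)))) x := by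
  have hsin : sin (π * x / L) ≠ 0 := (sin_pi_mul_div_pos hx).ne'
  have hshift_ne : ∀ k : ℕ, ν + k + 1 ≠ 0 := fun k => by positivity
  rw [potential_eq_poschlTeller hε₀ hW hE₀ hV _ (hshift_ne _) hsin,
    potential_eq_poschlTeller hε₀ hW hE₀ hV _ (hshift_ne _) hsin,
    deriv_deriv_log_sin (hasDerivAt_pi_mul_div L) hsin, hε₀]
  push_cast
  ring

theorem hierarchic_potential_difference (L hbar M ν β : ℝ) (hL : 0 < L) (hhbar : 0 < hbar)
    (hM : 0 < M) (hν : 0 ≤ ν) (hβ : 0 ≤ β)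
    (ε₀ : ℝ) (hε₀ : ε₀ = hbar^2 * Real.pi^2 / (2 * M * L^2))
    (m : ℕ)
    (W : ℕ → ℝ → ℝ)
    (hW : ∀ (k : ℕ) (x : ℝ), W k x = -(Real.pi * hbar / L) *
        ((ν + k + 1) * (Real.cos (Real.pi * x / L) / Real.sin (Real.pi * x / L)) - β / (ν + k + 1)))
    (E₀ : ℕ → ℝ)
    (hE₀ : ∀ k : ℕ, E₀ k = ε₀ * (((k : ℝ) + ν + 1)^2 - β^2 / ((k : ℝ) + ν + 1)^2))
    (V : ℕ → ℝ → ℝ)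
    (hV : ∀ (k : ℕ) (x : ℝ),
        V k x = (1 / (2 * M)) * ((W k x)^2 - hbar * deriv (W k) x) + E₀ k)
    (x : ℝ) (hx : x ∈ Ioo 0 L) :
    V (m + 1) x - V 0 x
      = -(hbar^2 * ((m : ℝ) + 1) * (2 * ν + m + 2) / (2 * M)) *
          deriv (deriv (fun y => Real.log (Real.sin (Real.pi * y / L)))) x :=
  hierarchic_potential_difference_general L hbar M ν β hν ε₀ hε₀ m W hW E₀ hE₀ V hV x hx
end

section
/- Suppose H is a linear operator on a vector space, A₀, …, A_m are linear operators, E₀, …, E_m are scalars, and H_k (k = 0, …, m+1) are linear operators with H₀ = H such that H_k A_k† = A_k† H_{k+1} for each k, where H_k = (1/2M) A_k† A_k + E_k and H_{k+1} = (1/2M) A_k A_k† + E_k. Then, setting B_m† = A₀† A₁† ⋯ A_m†, one has H B_m† = B_m† H_{m+1} and B_m† B_m = (2M)^{m+1} ∏_{k=0}^{m} (H − E_k), where B_m = A_m ⋯ A₁ A₀. -/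
/-!
Each `A_k†` intertwines `H_k` with `H_{k+1}`, so the product `B_m† = A₀† ⋯ A_m†` intertwines
`H = H₀` with `H_{m+1}`. For the product formula peel off the innermost pair:
`B_m† B_m = B_{m-1}† (A_m† A_m) B_{m-1} = 2M · B_{m-1}† (H_m − E_m) B_{m-1}`, and the
intertwining relation for `B_{m-1}†` moves `H_m − E_m` to the left as `H − E_m`.
What remains is `B_{m-1}† B_{m-1}`, handled by induction; all factors `H − E_k` commute.
-/

theorem semiconjBy_prod_range {R : Type*} [Monoid R] (Hs a : ℕ → R) (n : ℕ)
    (hint : ∀ k < n, SemiconjBy (a k) (Hs (k + 1)) (Hs k)) :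
    SemiconjBy ((List.range n).map a).prod (Hs n) (Hs 0) := by
  induction n with
  | zero => exact SemiconjBy.one_left _
  | succ n ih =>
    rw [List.range_succ, List.map_append, List.prod_append, List.map_singleton,
      List.prod_singleton]
    exact (ih fun k hk => hint k (hk.trans n.lt_succ_self)).mul_left (hint n n.lt_succ_self)

section Algebra

variable {𝕜 R : Type*} [CommRing 𝕜] [Ring R] [Algebra 𝕜 R]

theorem SemiconjBy.sub_smul_one {a x y : R} (h : SemiconjBy a x y) (e : 𝕜) :
    SemiconjBy a (x - e • 1) (y - e • 1) := by
  refine h.sub_right ?_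
  rw [← Algebra.algebraMap_eq_smul_one]
  exact Algebra.commute_algebraMap_right e a

theorem commute_sub_smul_one_prod {ι : Type*} (x : R) (e : 𝕜) (E : ι → 𝕜) (l : List ι) :
    Commute (x - e • 1) (l.map fun k => x - E k • 1).prod := by
  refine Commute.list_prod_right _ _ fun y hy => ?_
  obtain ⟨k, -, rfl⟩ := List.mem_map.mp hy
  simp only [← Algebra.algebraMap_eq_smul_one]
  exact ((Commute.refl x).sub_right (Algebra.commute_algebraMap_right (E k) x)).sub_left
    (Algebra.commute_algebraMap_left e _)

theorem prod_range_mul_prod_range_reverse (c : 𝕜) (E : ℕ → 𝕜) (Hs a adag : ℕ → R) (n : ℕ)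
    (hfact : ∀ k < n, adag k * a k = c • (Hs k - E k • 1))
    (hint : ∀ k < n, SemiconjBy (adag k) (Hs (k + 1)) (Hs k)) :
    ((List.range n).map adag).prod * ((List.range n).reverse.map a).prod
      = c ^ n • ((List.range n).map fun k => Hs 0 - E k • 1).prod := by
  induction n with
  | zero => simp
  | succ n ih =>
    set Bdag := ((List.range n).map adag).prod
    set B := ((List.range n).reverse.map a).prod
    have hBdag : SemiconjBy Bdag (Hs n - E n • 1) (Hs 0 - E n • 1) :=
      (semiconjBy_prod_range Hs adag n fun k hk =>
        hint k (hk.trans n.lt_succ_self)).sub_smul_one (E n)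
    have hprod : Bdag * B = c ^ n • ((List.range n).map fun k => Hs 0 - E k • 1).prod :=
      ih (fun k hk => hfact k (hk.trans n.lt_succ_self))
        (fun k hk => hint k (hk.trans n.lt_succ_self))
    simp only [List.range_succ, List.reverse_append, List.map_append, List.prod_append,
      List.reverse_singleton, List.singleton_append, List.map_cons, List.map_nil, List.prod_cons,
      List.prod_nil, mul_one]
    calc Bdag * adag n * (a n * B) = Bdag * (adag n * a n) * B := by simp only [mul_assoc]
      _ = c • ((Hs 0 - E n • 1) * (Bdag * B)) := by
        rw [hfact n n.lt_succ_self, mul_smul_comm, hBdag.eq, smul_mul_assoc, mul_assoc]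
      _ = _ := by
        rw [hprod, mul_smul_comm, smul_smul, ← pow_succ',
          (commute_sub_smul_one_prod (Hs 0) (E n) E (List.range n)).eq]

end Algebra

theorem eq_smul_sub_of_eq_inv_smul_add {K V : Type*} [DivisionRing K] [AddCommGroup V]
    [Module K V] {c : K} (hc : c ≠ 0) {x y z : V} (h : x = c⁻¹ • y + z) : y = c • (x - z) := by
  rw [h, add_sub_cancel_right, smul_inv_smul₀ hc]

theorem hierarchic_intertwining_and_product_general
    (V : Type*) [AddCommGroup V] [Module ℂ V]
    (M : ℂ) (hM : M ≠ 0) (m : ℕ)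
    (H : Module.End ℂ V)
    (A Adag : ℕ → Module.End ℂ V)
    (E : ℕ → ℂ)
    (Hs : ℕ → Module.End ℂ V)
    (hH0 : Hs 0 = H)
    (hfact : ∀ k ≤ m, Hs k = (1 / (2 * M)) • (Adag k * A k) + E k • (1 : Module.End ℂ V))
    (hint : ∀ k ≤ m, Hs k * Adag k = Adag k * Hs (k + 1))
    (Bm Bmdag : Module.End ℂ V)
    (hBm : Bm = ((List.range (m + 1)).reverse.map A).prod)
    (hBmdag : Bmdag = ((List.range (m + 1)).map Adag).prod) :
    H * Bmdag = Bmdag * Hs (m + 1) ∧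
    Bmdag * Bm
      = (2 * M) ^ (m + 1) •
          ((List.range (m + 1)).map (fun k => H - E k • (1 : Module.End ℂ V))).prod := by
  subst hH0 hBm hBmdag
  have hsemiconj : ∀ k < m + 1, SemiconjBy (Adag k) (Hs (k + 1)) (Hs k) :=
    fun k hk => (hint k (Nat.lt_succ_iff.mp hk)).symm
  have hAdagA : ∀ k < m + 1, Adag k * A k = (2 * M) • (Hs k - E k • 1) := fun k hk =>
    eq_smul_sub_of_eq_inv_smul_add (mul_ne_zero two_ne_zero hM)
      (one_div (2 * M) ▸ hfact k (Nat.lt_succ_iff.mp hk))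
  exact ⟨(semiconjBy_prod_range Hs Adag (m + 1) hsemiconj).eq.symm,
    prod_range_mul_prod_range_reverse (2 * M) E Hs A Adag (m + 1) hAdagA hsemiconj⟩

theorem hierarchic_intertwining_and_product
    (V : Type*) [AddCommGroup V] [Module ℂ V]
    (M : ℂ) (hM : M ≠ 0) (m : ℕ)
    (H : Module.End ℂ V)
    (A Adag : ℕ → Module.End ℂ V)
    (E : ℕ → ℂ)
    (Hs : ℕ → Module.End ℂ V)
    (hH0 : Hs 0 = H)
    (hfact : ∀ k ≤ m, Hs k = (1 / (2 * M)) • (Adag k * A k) + E k • (1 : Module.End ℂ V))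
    (hfact' : ∀ k ≤ m, Hs (k + 1) = (1 / (2 * M)) • (A k * Adag k) + E k • (1 : Module.End ℂ V))
    (hint : ∀ k ≤ m, Hs k * Adag k = Adag k * Hs (k + 1))
    (Bm Bmdag : Module.End ℂ V)
    (hBm : Bm = ((List.range (m + 1)).reverse.map A).prod)
    (hBmdag : Bmdag = ((List.range (m + 1)).map Adag).prod) :
    H * Bmdag = Bmdag * Hs (m + 1) ∧
    Bmdag * Bm
      = (2 * M) ^ (m + 1) •
          ((List.range (m + 1)).map (fun k => H - E k • (1 : Module.End ℂ V))).prod :=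
  hierarchic_intertwining_and_product_general V M hM m H A Adag E Hs hH0 hfact hint Bm Bmdag hBm
    hBmdag
end

section
/- Under the hypotheses of the previous statement, B_m B_m† = (2M)^{m+1} ∏_{k=0}^{m} (H_{m+1} − E_k). -/
/-!
Each pair `A k * Adag k` equals `s • (Hs (k + 1) - e k)`. Peeling off the outermost pair, the
intertwining relation `Hs (n + 1) * Adag (n + 1) = Adag (n + 1) * Hs (n + 2)` pushes the inner
polynomial in `Hs (n + 1)` past `Adag (n + 1)`, turning it into the same polynomial in `Hs (n + 2)`,
which commutes with the new factor `Hs (n + 2) - e (n + 1)`.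
-/

section Hierarchy

variable {𝕜 R ι : Type*} [CommRing 𝕜] [Ring R] [Algebra 𝕜 R]

theorem SemiconjBy.list_prod_map_sub_algebraMap {D X Y : R} (h : SemiconjBy D Y X)
    (l : List ι) (e : ι → 𝕜) :
    SemiconjBy D (l.map fun i => Y - algebraMap 𝕜 R (e i)).prod
      (l.map fun i => X - algebraMap 𝕜 R (e i)).prod := by
  induction l with
  | nil => exact SemiconjBy.one_right D
  | cons i l ih =>
    simpa only [List.map_cons, List.prod_cons] using
      (h.sub_right (Algebra.commute_algebraMap_right (e i) D)).mul_right ih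

theorem Commute.sub_algebraMap_list_prod (X : R) (a : 𝕜) (l : List ι) (e : ι → 𝕜) :
    Commute (X - algebraMap 𝕜 R a) (l.map fun i => X - algebraMap 𝕜 R (e i)).prod :=
  Commute.list_prod_right _ _ fun _ hx => by
    obtain ⟨i, -, rfl⟩ := List.mem_map.mp hx
    exact ((Commute.refl X).sub_right (Algebra.commute_algebraMap_right _ X)).sub_left
      ((Algebra.commute_algebraMap_left a X).sub_right (Algebra.commute_algebraMap_left a _))

theorem list_prod_reverse_map_mul_list_prod_map (s : 𝕜) (A Adag Hs : ℕ → R) (e : ℕ → 𝕜)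
    (m : ℕ) (hfactor : ∀ k ≤ m, A k * Adag k = s • (Hs (k + 1) - algebraMap 𝕜 R (e k)))
    (hint : ∀ k ≤ m, Hs k * Adag k = Adag k * Hs (k + 1)) :
    ((List.range (m + 1)).reverse.map A).prod * ((List.range (m + 1)).map Adag).prod
      = s ^ (m + 1) •
          ((List.range (m + 1)).map fun k => Hs (m + 1) - algebraMap 𝕜 R (e k)).prod := by
  induction m with
  | zero => simpa using hfactor 0 le_rfl
  | succ n ih =>
    set P : R → R := fun X => ((List.range (n + 1)).map fun k => X - algebraMap 𝕜 R (e k)).prod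
    have hprev : ((List.range (n + 1)).reverse.map A).prod * ((List.range (n + 1)).map Adag).prod
        = s ^ (n + 1) • P (Hs (n + 1)) :=
      ih (fun k hk => hfactor k (by omega)) (fun k hk => hint k (by omega))
    have hpush : P (Hs (n + 1)) * Adag (n + 1) = Adag (n + 1) * P (Hs (n + 2)) :=
      ((SemiconjBy.list_prod_map_sub_algebraMap (hint (n + 1) le_rfl).symm _ e).eq).symm
    have hcomm : Commute (Hs (n + 2) - algebraMap 𝕜 R (e (n + 1))) (P (Hs (n + 2))) :=
      Commute.sub_algebraMap_list_prod _ _ _ e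
    simp only [List.range_succ (n := n + 1), List.reverse_append, List.map_append, List.prod_append,
      List.reverse_singleton, List.map_cons, List.map_nil, List.prod_cons, List.prod_nil, mul_one]
    calc A (n + 1) * ((List.range (n + 1)).reverse.map A).prod
          * (((List.range (n + 1)).map Adag).prod * Adag (n + 1))
        = A (n + 1) * (s ^ (n + 1) • P (Hs (n + 1))) * Adag (n + 1) := by
          rw [← hprev]; noncomm_ring
      _ = s ^ (n + 1) • (A (n + 1) * Adag (n + 1) * P (Hs (n + 2))) := by
          rw [mul_smul_comm, smul_mul_assoc, mul_assoc, hpush, mul_assoc]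
      _ = s ^ (n + 2) • (P (Hs (n + 2)) * (Hs (n + 2) - algebraMap 𝕜 R (e (n + 1)))) := by
          rw [hfactor (n + 1) le_rfl, smul_mul_assoc, smul_smul, ← pow_succ, hcomm.eq]

end Hierarchy

theorem hierarchic_product_reversed_general
    (V : Type*) [AddCommGroup V] [Module ℂ V]
    (M : ℂ) (hM : M ≠ 0) (m : ℕ)
    (A Adag : ℕ → Module.End ℂ V)
    (E : ℕ → ℂ)
    (Hs : ℕ → Module.End ℂ V)
    (hfact' : ∀ k ≤ m, Hs (k + 1) = (1 / (2 * M)) • (A k * Adag k) + E k • (1 : Module.End ℂ V))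
    (hint : ∀ k ≤ m, Hs k * Adag k = Adag k * Hs (k + 1))
    (Bm Bmdag : Module.End ℂ V)
    (hBm : Bm = ((List.range (m + 1)).reverse.map A).prod)
    (hBmdag : Bmdag = ((List.range (m + 1)).map Adag).prod) :
    Bm * Bmdag
      = (2 * M) ^ (m + 1) •
          ((List.range (m + 1)).map (fun k => Hs (m + 1) - E k • (1 : Module.End ℂ V))).prod := by
  have h2M : 2 * M ≠ 0 := mul_ne_zero two_ne_zero hM
  have hfactor : ∀ k ≤ m, A k * Adag k
      = (2 * M) • (Hs (k + 1) - algebraMap ℂ (Module.End ℂ V) (E k)) := fun k hk => by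
    rw [Algebra.algebraMap_eq_smul_one, hfact' k hk, add_sub_cancel_right, smul_smul,
      mul_one_div_cancel h2M, one_smul]
  simpa only [hBm, hBmdag, Algebra.algebraMap_eq_smul_one] using
    list_prod_reverse_map_mul_list_prod_map (2 * M) A Adag Hs E m hfactor hint

theorem hierarchic_product_reversed
    (V : Type*) [AddCommGroup V] [Module ℂ V]
    (M : ℂ) (hM : M ≠ 0) (m : ℕ)
    (H : Module.End ℂ V)
    (A Adag : ℕ → Module.End ℂ V)
    (E : ℕ → ℂ)
    (Hs : ℕ → Module.End ℂ V)
    (hH0 : Hs 0 = H)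
    (hfact : ∀ k ≤ m, Hs k = (1 / (2 * M)) • (Adag k * A k) + E k • (1 : Module.End ℂ V))
    (hfact' : ∀ k ≤ m, Hs (k + 1) = (1 / (2 * M)) • (A k * Adag k) + E k • (1 : Module.End ℂ V))
    (hint : ∀ k ≤ m, Hs k * Adag k = Adag k * Hs (k + 1))
    (Bm Bmdag : Module.End ℂ V)
    (hBm : Bm = ((List.range (m + 1)).reverse.map A).prod)
    (hBmdag : Bmdag = ((List.range (m + 1)).map Adag).prod) :
    Bm * Bmdag
      = (2 * M) ^ (m + 1) •
          ((List.range (m + 1)).map (fun k => Hs (m + 1) - E k • (1 : Module.End ℂ V))).prod :=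
  hierarchic_product_reversed_general V M hM m A Adag E Hs hfact' hint Bm Bmdag hBm hBmdag
end
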